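/- Let b ≥ 2 and let a₁, a₂ be coprime to b with 1 ≤ a₁, a₂ ≤ b-1. Suppose there exist r, s such that b ≡ r (mod a₁), b ≡ r (mod a₂), a₁ ≡ a₂ ≡ s (mod r), and b mod a₁ = r with a₁ mod r reducing to 1 in the continued-fraction sense (i.e., the Euclidean remainder sequence of (b, aᵢ) has length 2: b, aᵢ, r, 1). If inv(a₁,b) = inv(a₂,b), then a₁ = a₂. -/

import Mathlib

/-- The sawtooth function ((x)): 0 if x is an integer, else x - ⌊x⌋ - 1/2. -/
def sawtooth (x : ℚ) : ℚ := if x.den = 1 then 0 else x - ⌊x⌋ - 1/2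

/-- The Dedekind sum s(a,b) = ∑_{i=1}^{b-1} (i/b)·((a·i/b)). -/
def dedekindSum (a b : ℕ) : ℚ :=
  ∑ i ∈ Finset.Icc 1 (b - 1), (i : ℚ) / (b : ℚ) * sawtooth ((a * i : ℕ) / (b : ℚ))

/-- Representative of a·x mod b in {1, ..., b}. -/
def modRep (a b x : ℕ) : ℕ := if a * x % b = 0 then b else a * x % b

/-- inv(a,b): number of pairs 1 ≤ i < j ≤ b with a·i mod b > a·j mod b
(representatives in {1,...,b}). -/
def invNum (a b : ℕ) : ℕ :=
  ((Finset.Icc 1 b ×ˢ Finset.Icc 1 b).filter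
    (fun p => p.1 < p.2 ∧ modRep a b p.2 < modRep a b p.1)).card

/-
Counting inversions by the carries in `a * i + a * (j - i) = a * j` gives
`inv(a, b) = 3 ∑ j ⌊aj/b⌋ - (2b - 1) ∑ ⌊aj/b⌋`, and counting the lattice points under the line
`y = a x / b` by columns and by rows turns this into the reciprocity law
`4 (a inv(a, b) + b inv(b, a)) = (a - 1)(b - 1)(a + b - 1)`.
If `b % a = r` and `a % r = 1`, then `inv(b, a) = inv(r, a)` and `inv(a, r) = inv(1, r) = 0`, so two
applications of reciprocity give `4 a r inv(a, b) = (b - r)(a - 1)(r b + a - 1)`. For fixed `b` and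
`r` the right-hand side divided by `a` is strictly increasing in `a`, because
`a₂ (a₁ - 1)(r b + a₁ - 1) - a₁ (a₂ - 1)(r b + a₂ - 1) = (a₁ - a₂)(a₁ a₂ + r b - 1)`.
-/

open Finset

lemma two_mul_sum_range_id (n : ℕ) : 2 * ∑ j ∈ range n, (j : ℤ) = n * (n - 1) := by
  induction n with
  | zero => simp
  | succ n ih => rw [sum_range_succ, mul_add, ih]; push_cast; ring

lemma six_mul_sum_range_sq (n : ℕ) :
    6 * ∑ j ∈ range n, (j : ℤ) ^ 2 = n * (n - 1) * (2 * n - 1) := by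
  induction n with
  | zero => simp
  | succ n ih => rw [sum_range_succ, mul_add, ih]; push_cast; ring

lemma two_mul_sum_Ico_id {c n : ℕ} (h : c ≤ n) :
    2 * ∑ j ∈ Ico c n, (j : ℤ) = n * (n - 1) - c * (c - 1) := by
  rw [sum_Ico_eq_sub _ h, mul_sub, two_mul_sum_range_id, two_mul_sum_range_id]

lemma sum_range_comp_mul_mod {M : Type*} [AddCommMonoid M] {a b : ℕ} (hab : Nat.Coprime a b)
    (f : ℕ → M) : ∑ j ∈ range b, f (a * j % b) = ∑ j ∈ range b, f j := by
  rcases Nat.eq_zero_or_pos b with rfl | hb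
  · simp
  let σ : Fin b → Fin b := fun j => ⟨a * j % b, Nat.mod_lt _ hb⟩
  have hσ : Function.Injective σ := by
    intro i j hij
    have hmod : a * i ≡ a * j [MOD b] := congrArg Fin.val hij
    exact Fin.ext ((hmod.cancel_left_of_coprime hab.symm).eq_of_lt_of_lt i.2 j.2)
  rw [← Fin.sum_univ_eq_sum_range f, ← (Finite.injective_iff_bijective.mp hσ).sum_comp]
  exact (Fin.sum_univ_eq_sum_range (fun j => f (a * j % b)) b).symm

lemma Nat.add_div_eq_add_ite_mod_lt (m n : ℕ) {c : ℕ} (hc : 0 < c) :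
    (m + n) / c = m / c + n / c + if (m + n) % c < m % c then 1 else 0 := by
  rw [Nat.add_div hc]
  have h := Nat.add_mod_add_ite m n c
  have := Nat.mod_lt n hc
  split_ifs at h ⊢ <;> omega

lemma modRep_eq_mod {a b x : ℕ} (hab : Nat.Coprime a b) (hx : 0 < x) (hxb : x < b) :
    modRep a b x = a * x % b := by
  refine if_neg fun h => ?_
  have := Nat.le_of_dvd hx ((Nat.Coprime.symm hab).dvd_of_dvd_mul_left (Nat.dvd_of_mod_eq_zero h))
  omega

lemma modRep_le (a : ℕ) {b : ℕ} (hb : 0 < b) (x : ℕ) : modRep a b x ≤ b := by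
  unfold modRep
  split_ifs
  exacts [le_rfl, (Nat.mod_lt _ hb).le]

/-- Position `b` carries the maximal representative `b` and position `0` the minimal residue `0`, so
neither takes part in an inversion and `modRep` can be traded for `% b`. -/
lemma invNum_eq_sum_card {a b : ℕ} (hab : Nat.Coprime a b) :
    invNum a b = ∑ j ∈ range b, #{i ∈ range j | a * j % b < a * i % b} := by
  rw [invNum, ← card_sigma]
  refine card_nbij' (fun p => ⟨p.2, p.1⟩) (fun q => (q.2, q.1)) ?_ ?_ (fun _ _ => rfl)
    (fun _ _ => rfl)
  · rintro ⟨i, j⟩ hij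
    simp only [coe_filter, mem_product, mem_Icc, Set.mem_ofPred_eq] at hij
    obtain ⟨⟨⟨hi, -⟩, -, hjb_le⟩, hlt, hinv⟩ := hij
    have hjb : j < b := by
      refine hjb_le.lt_of_ne fun hjb' => ?_
      rw [hjb', modRep, if_pos (Nat.mul_mod_left a b)] at hinv
      exact (modRep_le a (by omega) i).not_gt hinv
    rw [modRep_eq_mod hab (by omega) hjb, modRep_eq_mod hab hi (by omega)] at hinv
    simp [hjb, hlt, hinv]
  · rintro ⟨j, i⟩ hmem
    simp only [coe_sigma, Set.mem_sigma_iff, coe_range, Set.mem_Iio, coe_filter, mem_range,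
      Set.mem_ofPred_eq] at hmem
    obtain ⟨hjb, hij, hinv⟩ := hmem
    have hi : 0 < i := Nat.pos_of_ne_zero (by rintro rfl; simp at hinv)
    simp only [coe_filter, mem_product, mem_Icc, Set.mem_ofPred_eq]
    rw [modRep_eq_mod hab (by omega) hjb, modRep_eq_mod hab hi (by omega)]
    omega

lemma sum_range_comp_sub {M : Type*} [AddCommGroup M] (f : ℕ → M) (n : ℕ) :
    ∑ i ∈ range n, f (n - i) = ∑ i ∈ range (n + 1), f i - f 0 := by
  rw [sum_range_succ', add_sub_cancel_right, ← sum_range_reflect]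
  refine sum_congr rfl fun i hi => ?_
  rw [mem_range] at hi
  congr 1
  omega

lemma sum_range_sum_range_eq_sum_mul {R : Type*} [CommRing R] (f : ℕ → R) (n : ℕ) :
    ∑ j ∈ range n, ∑ i ∈ range j, f i = ∑ i ∈ range n, ((n : R) - 1 - i) * f i := by
  induction n with
  | zero => simp
  | succ n ih =>
    rw [sum_range_succ, ih, sum_range_succ _ n, ← sum_add_distrib]
    push_cast
    rw [add_sub_cancel_right, sub_self, zero_mul, add_zero]
    exact sum_congr rfl fun i _ => by ring

lemma invNum_eq_floor_sums {a b : ℕ} (hab : Nat.Coprime a b) :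
    (invNum a b : ℤ) = 3 * ∑ j ∈ range b, (j : ℤ) * (a * j / b : ℕ)
      - (2 * b - 1) * ∑ j ∈ range b, ((a * j / b : ℕ) : ℤ) := by
  set F : ℕ → ℤ := fun x => (a * x / b : ℕ)
  have hcarry : ∀ j, ∀ i < j,
      (if a * j % b < a * i % b then 1 else 0 : ℤ) = F j - F i - F (j - i) := by
    intro j i hij
    have hsplit : a * j = a * i + a * (j - i) := by rw [← mul_add]; congr; omega
    rcases Nat.eq_zero_or_pos b with rfl | hb
    · simp [F, Nat.mul_le_mul_left a hij.le]
    have := Nat.add_div_eq_add_ite_mod_lt (a * i) (a * (j - i)) hb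
    rw [← hsplit] at this
    simp only [F, this]
    push_cast
    ring
  have hrow : ∀ j, (#{i ∈ range j | a * j % b < a * i % b} : ℤ)
      = (j - 1) * F j - 2 * ∑ i ∈ range j, F i := by
    intro j
    rw [card_filter, Nat.cast_sum]
    push_cast
    rw [sum_congr rfl fun i hi => hcarry j i (mem_range.mp hi), sum_sub_distrib, sum_sub_distrib,
      sum_const, card_range, nsmul_eq_mul, sum_range_comp_sub, sum_range_succ]
    simp only [F, mul_zero, Nat.zero_div, Nat.cast_zero]
    ring
  rw [invNum_eq_sum_card hab, Nat.cast_sum, sum_congr rfl fun j _ => hrow j, sum_sub_distrib,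
    ← mul_sum, sum_range_sum_range_eq_sum_mul, mul_sum, mul_sum, mul_sum, ← sum_sub_distrib,
    ← sum_sub_distrib]
  refine sum_congr rfl fun j _ => ?_
  ring

lemma two_mul_sum_range_mul_div {a b : ℕ} (hab : Nat.Coprime a b) :
    2 * ∑ j ∈ range b, ((a * j / b : ℕ) : ℤ) = (a - 1) * (b - 1) := by
  rcases Nat.eq_zero_or_pos b with rfl | hb
  · simp [(Nat.coprime_zero_right a).mp hab]
  have hdiv : ∀ j, (b : ℤ) * (a * j / b : ℕ) = a * j - (a * j % b : ℕ) := fun j => by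
    rw [eq_sub_iff_add_eq]
    exact_mod_cast Nat.div_add_mod (a * j) b
  have hmod := sum_range_comp_mul_mod hab (fun x => (x : ℤ))
  have hgauss := two_mul_sum_range_id b
  refine mul_left_cancel₀ (Int.natCast_ne_zero.mpr hb.ne') ?_
  rw [mul_left_comm, mul_sum, sum_congr rfl fun j _ => hdiv j, sum_sub_distrib, hmod, ← mul_sum]
  linear_combination ((a : ℤ) - 1) * hgauss

lemma sum_range_mul_div_smul_eq_sum_Ico {M : Type*} [AddCommMonoid M] {a b : ℕ}
    (hab : Nat.Coprime a b) (f : ℕ → M) :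
    ∑ j ∈ range b, (a * j / b) • f j = ∑ m ∈ Ico 1 a, ∑ j ∈ Ico (m * b / a + 1) b, f j := by
  -- `m * b = a * j` would force `a ∣ m`, so no lattice point with `0 < m < a` lies on the line
  have hne : ∀ m j, 0 < m → m < a → m * b ≠ a * j := fun m j hm hma h =>
    (Nat.le_of_dvd hm (hab.dvd_of_dvd_mul_right ⟨j, h⟩)).not_gt hma
  have hrow : ∀ j, (a * j / b) • f j = ∑ _m ∈ Icc 1 (a * j / b), f j := fun j => by simp
  rw [sum_congr rfl fun j _ => hrow j]
  refine sum_comm' fun j m => ?_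
  simp only [mem_range, mem_Icc, mem_Ico]
  constructor
  · rintro ⟨hjb, hm, hmj⟩
    have ha : 0 < a := Nat.pos_of_ne_zero (by rintro rfl; rw [zero_mul, Nat.zero_div] at hmj; omega)
    rw [Nat.le_div_iff_mul_le (by omega)] at hmj
    have hma : m < a :=
      Nat.lt_of_mul_lt_mul_right (hmj.trans_lt (Nat.mul_lt_mul_of_pos_left hjb ha))
    have hmj' : m * b / a < j := by
      rw [Nat.div_lt_iff_lt_mul (by omega), mul_comm j]
      exact lt_of_le_of_ne hmj (hne m j hm hma)
    omega
  · rintro ⟨⟨hmj, hjb⟩, hm, hma⟩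
    rw [Nat.add_one_le_iff, Nat.div_lt_iff_lt_mul (by omega), mul_comm j] at hmj
    rw [Nat.le_div_iff_mul_le (by omega)]
    exact ⟨hjb, hm, hmj.le⟩

lemma two_mul_sum_range_id_mul_mul_div {a b : ℕ} (hab : Nat.Coprime a b) (ha : 0 < a)
    (hb : 0 < b) :
    2 * ∑ j ∈ range b, (j : ℤ) * (a * j / b : ℕ)
      = (a - 1) * b * (b - 1) - ∑ m ∈ range a, (((b * m / a : ℕ) : ℤ) ^ 2 + (b * m / a : ℕ)) := by
  have hinner : ∀ m ∈ Ico 1 a, 2 * ∑ j ∈ Ico (m * b / a + 1) b, (j : ℤ)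
      = b * (b - 1) - (((b * m / a : ℕ) : ℤ) ^ 2 + (b * m / a : ℕ)) := by
    intro m hm
    have hlt : m * b / a < b :=
      Nat.div_lt_of_lt_mul (Nat.mul_lt_mul_of_pos_right (mem_Ico.mp hm).2 hb)
    rw [two_mul_sum_Ico_id hlt, mul_comm b m]
    push_cast
    ring
  have hswap := sum_range_mul_div_smul_eq_sum_Ico hab (fun j => (j : ℤ))
  simp only [nsmul_eq_mul] at hswap
  calc 2 * ∑ j ∈ range b, (j : ℤ) * (a * j / b : ℕ)
      = 2 * ∑ m ∈ Ico 1 a, ∑ j ∈ Ico (m * b / a + 1) b, (j : ℤ) := by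
        rw [← hswap]
        exact congrArg _ (sum_congr rfl fun j _ => mul_comm _ _)
    _ = ∑ m ∈ Ico 1 a, (b * (b - 1) - (((b * m / a : ℕ) : ℤ) ^ 2 + (b * m / a : ℕ))) := by
        rw [mul_sum]
        exact sum_congr rfl hinner
    _ = _ := by
        rw [sum_sub_distrib, sum_const, Nat.card_Ico, range_eq_Ico, sum_eq_sum_Ico_succ_bot ha]
        simp only [nsmul_eq_mul, Nat.cast_sub ha, mul_zero, Nat.zero_div, Nat.cast_zero]
        ring

lemma sum_range_mul_div_reciprocity {a b : ℕ} (hab : Nat.Coprime a b) (ha : 0 < a) (hb : 0 < b) :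
    12 * (a * ∑ j ∈ range b, (j : ℤ) * (a * j / b : ℕ)
        + b * ∑ m ∈ range a, (m : ℤ) * (b * m / a : ℕ))
      = (a - 1) * (b - 1) * (8 * a * b - a - b - 1) := by
  have hdiv : ∀ m, (a : ℤ) * (b * m / a : ℕ) = b * m - (b * m % a : ℕ) := fun m => by
    rw [eq_sub_iff_add_eq]
    exact_mod_cast Nat.div_add_mod (b * m) a
  have h₁ : a * ∑ m ∈ range a, ((b * m / a : ℕ) : ℤ) = (b - 1) * ∑ m ∈ range a, (m : ℤ) := by
    rw [mul_sum, sum_congr rfl fun m _ => hdiv m, sum_sub_distrib,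
      sum_range_comp_mul_mod hab.symm (fun x => (x : ℤ)), ← mul_sum]
    ring
  have h₂ : ∑ m ∈ range a, (m : ℤ) ^ 2 = b ^ 2 * ∑ m ∈ range a, (m : ℤ) ^ 2
      - 2 * a * b * ∑ m ∈ range a, (m : ℤ) * (b * m / a : ℕ)
      + a ^ 2 * ∑ m ∈ range a, ((b * m / a : ℕ) : ℤ) ^ 2 := by
    conv_lhs => rw [← sum_range_comp_mul_mod hab.symm (fun x => (x : ℤ) ^ 2)]
    rw [mul_sum, mul_sum, mul_sum, ← sum_sub_distrib, ← sum_add_distrib]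
    refine sum_congr rfl fun m _ => ?_
    linear_combination (((b * m % a : ℕ) : ℤ) + b * m - a * (b * m / a : ℕ)) * hdiv m
  have hS1 := two_mul_sum_range_id_mul_mul_div hab ha hb
  rw [sum_add_distrib] at hS1
  have hgauss₁ := two_mul_sum_range_id a
  have hgauss₂ := six_mul_sum_range_sq a
  refine mul_left_cancel₀ (show (a : ℤ) ≠ 0 by exact_mod_cast ha.ne') ?_
  linear_combination 6 * a ^ 2 * hS1 + 6 * h₂ - 6 * a * h₁ + (b ^ 2 - 1) * hgauss₂
    - 3 * a * (b - 1) * hgauss₁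

theorem invNum_reciprocity {a b : ℕ} (hab : Nat.Coprime a b) (ha : 0 < a) (hb : 0 < b) :
    4 * ((a : ℤ) * invNum a b + b * invNum b a) = (a - 1) * (b - 1) * (a + b - 1) := by
  rw [invNum_eq_floor_sums hab, invNum_eq_floor_sums hab.symm]
  have hrec := sum_range_mul_div_reciprocity hab ha hb
  have hS₀ := two_mul_sum_range_mul_div hab
  have hS₀' := two_mul_sum_range_mul_div hab.symm
  linear_combination hrec - 2 * a * (2 * b - 1) * hS₀ - 2 * b * (2 * a - 1) * hS₀'

lemma invNum_mod_left (a b : ℕ) : invNum (a % b) b = invNum a b := by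
  have : modRep (a % b) b = modRep a b := funext fun x => by simp only [modRep, Nat.mod_mul_mod]
  rw [invNum, invNum, this]

lemma invNum_one_left (b : ℕ) : invNum 1 b = 0 := by
  refine card_eq_zero.mpr (filter_eq_empty_iff.mpr fun p hp => ?_)
  simp only [mem_product, mem_Icc] at hp
  have hrep : ∀ x, 1 ≤ x → x ≤ b → modRep 1 b x = x := fun x h₁ h₂ => by
    rw [modRep, one_mul]
    rcases h₂.lt_or_eq with h₂ | rfl
    · rw [Nat.mod_eq_of_lt h₂, if_neg (by omega)]
    · rw [Nat.mod_self, if_pos rfl]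
  rw [hrep _ hp.2.1 hp.2.2, hrep _ hp.1.1 hp.1.2]
  omega

theorem four_mul_mul_mul_invNum_eq {a b r : ℕ} (hr : b % a = r) (ha : a % r = 1) :
    4 * a * r * (invNum a b : ℤ) = (b - r) * (a - 1) * (r * b + a - 1) := by
  rcases Nat.eq_zero_or_pos r with rfl | hr₀
  · simp [(Nat.mod_zero a).symm.trans ha]
  have ha₀ : 0 < a := Nat.pos_of_ne_zero (by rintro rfl; simp at ha)
  have hrb : r ≤ b := hr ▸ Nat.mod_le b a
  have hra : Nat.Coprime r a := by
    rw [Nat.Coprime, Nat.gcd_rec, ha, Nat.gcd_one_left]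
  have hab : Nat.Coprime a b := by
    rw [Nat.Coprime, Nat.gcd_rec, hr]; exact hra
  have h₁ := invNum_reciprocity hab ha₀ (by omega)
  have h₂ := invNum_reciprocity hra hr₀ ha₀
  rw [← invNum_mod_left b a, hr] at h₁
  rw [← invNum_mod_left a r, ha, invNum_one_left] at h₂
  push_cast at h₁ h₂
  linear_combination r * h₁ - b * h₂

theorem stmt18_general (b a₁ a₂ r : ℕ)
    (ha₁' : a₁ ≤ b - 1)
    (hr₁ : b % a₁ = r) (hr₂ : b % a₂ = r)
    (hone₁ : a₁ % r = 1) (hone₂ : a₂ % r = 1)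
    (hinv : invNum a₁ b = invNum a₂ b) :
    a₁ = a₂ := by
  have h₁ := four_mul_mul_mul_invNum_eq hr₁ hone₁
  have h₂ := four_mul_mul_mul_invNum_eq hr₂ hone₂
  have ha₁ : 0 < a₁ := Nat.pos_of_ne_zero (by rintro rfl; simp at hone₁)
  have ha₂ : 0 < a₂ := Nat.pos_of_ne_zero (by rintro rfl; simp at hone₂)
  have hrb : r < b := by have := hr₁ ▸ Nat.mod_lt b ha₁; omega
  rw [hinv] at h₁
  have hfactor : ((b : ℤ) - r) * ((a₁ - a₂) * (a₁ * a₂ + r * b - 1)) = 0 := by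
    linear_combination a₁ * h₂ - a₂ * h₁
  rcases mul_eq_zero.mp hfactor with h | h
  · omega
  rcases mul_eq_zero.mp h with h | h
  · omega
  -- `a₁ * a₂ + r * b = 1` leaves only `a₁ = a₂ = 1`
  · nlinarith

theorem stmt18 (b a₁ a₂ r s : ℕ) (hb : 2 ≤ b)
    (h₁ : Nat.Coprime a₁ b) (h₂ : Nat.Coprime a₂ b)
    (ha₁ : 1 ≤ a₁) (ha₁' : a₁ ≤ b - 1) (ha₂ : 1 ≤ a₂) (ha₂' : a₂ ≤ b - 1)
    (hr₁ : b % a₁ = r) (hr₂ : b % a₂ = r)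
    (hs₁ : a₁ % r = s) (hs₂ : a₂ % r = s)
    (hone₁ : a₁ % r = 1) (hone₂ : a₂ % r = 1)
    (hinv : invNum a₁ b = invNum a₂ b) :
    a₁ = a₂ :=
  stmt18_general b a₁ a₂ r ha₁' hr₁ hr₂ hone₁ hone₂ hinv
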